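/- Let (N, K, v) be a P-extendable incomplete cooperative game with K intersection-closed and N ∈ K. Then the R-game v_R, defined by d_{v_R}(S) = Δ_v(S) for S ∈ K and d_{v_R}(S) = 0 for S ∉ K, is a P-extension of (N, K, v): it is positive and satisfies v_R(S) = v(S) for every S ∈ K. -/

import Mathlib

open Finset

variable {α : Type*} [Fintype α] [DecidableEq α]

/-- A set system is intersection-closed if it is closed under pairwise intersections. -/
def InterClosed (K : Finset (Finset α)) : Prop :=
  ∀ S ∈ K, ∀ T ∈ K, S ∩ T ∈ K

/-- The closure `c_K(T) = ⋂ {S ∈ K : T ⊆ S}` of a coalition `T` in the set system `K`. -/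
def cl (K : Finset (Finset α)) (T : Finset α) : Finset α :=
  (K.filter fun S => T ⊆ S).inf id

/-- The family `C(T)` of coalitions indistinguishable from `T`. -/
def classOf (K : Finset (Finset α)) (T : Finset α) : Finset (Finset α) :=
  Finset.univ.filter fun X => cl K X = cl K T

/-- The Harsanyi dividend `d_w(S) = w S - ∑_{T ⊊ S} d_w(T)`. -/
noncomputable def dividend (w : Finset α → ℝ) (S : Finset α) : ℝ :=
  w S - ∑ T ∈ (S.powerset.erase S).attach, dividend w T.1
termination_by S.card
decreasing_by
  have h := T.2
  simp only [mem_erase, mem_powerset] at h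
  exact Finset.card_lt_card (h.2.ssubset_of_ne h.1)

/-- The surplus `Δ_v(S) = v S - ∑_{T ∈ K, T ⊊ S} Δ_v(T)` for `S ∈ K`. -/
noncomputable def Delta (K : Finset (Finset α)) (v : Finset α → ℝ) (S : Finset α) : ℝ :=
  v S - ∑ T ∈ (K.filter fun T => T ⊂ S).attach, Delta K v T.1
termination_by S.card
decreasing_by
  have h := T.2
  simp only [mem_filter] at h
  exact Finset.card_lt_card h.2

/-- A δ-system for the incomplete game `(N, K, v)`. -/
def IsDeltaSystem (K : Finset (Finset α)) (v δ : Finset α → ℝ) : Prop :=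
  (∀ S ∈ K, ∑ T ∈ S.powerset, δ T = v S) ∧
  ∀ S T : Finset α, cl K S = cl K T → δ S = δ T

/-- The payoff `Φ_i = ∑_{S ∋ i} δ(S)/|S|` computed from a dividend function `δ`. -/
noncomputable def UDofDelta (δ : Finset α → ℝ) (i : α) : ℝ :=
  ∑ S ∈ Finset.univ.filter (fun S => i ∈ S), δ S / S.card

/-- The complete game whose Harsanyi dividends are `δ`. -/
def gameOf (δ : Finset α → ℝ) (S : Finset α) : ℝ := ∑ T ∈ S.powerset, δ T

/-- A P-extension: a positive cooperative game agreeing with `v` on `K`. -/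
def PExtension (K : Finset (Finset α)) (v w : Finset α → ℝ) : Prop :=
  w ∅ = 0 ∧ (∀ S, 0 ≤ dividend w S) ∧ ∀ S ∈ K, w S = v S

/-- P-extendability of an incomplete game. -/
def PExtendable (K : Finset (Finset α)) (v : Finset α → ℝ) : Prop :=
  ∃ w, PExtension K v w

/-- The Shapley value `φ_i(w) = ∑_{S ∋ i} d_w(S)/|S|`. -/
noncomputable def shapley (w : Finset α → ℝ) (i : α) : ℝ :=
  ∑ S ∈ Finset.univ.filter (fun S => i ∈ S), dividend w S / S.card

lemma dividend_eq (w : Finset α → ℝ) (S : Finset α) :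
    dividend w S = w S - ∑ T ∈ S.powerset.erase S, dividend w T := by
  rw [dividend, Finset.sum_attach]

lemma sum_dividend (w : Finset α → ℝ) (S : Finset α) :
    ∑ T ∈ S.powerset, dividend w T = w S := by
  rw [← Finset.sum_erase_add _ _ (Finset.mem_powerset_self S), dividend_eq]
  ring

lemma dividend_gameOf (δ : Finset α → ℝ) (S : Finset α) :
    dividend (gameOf δ) S = δ S := by
  induction S using Finset.strongInduction with
  | _ S ih =>
    rw [dividend_eq]
    have h1 : ∑ T ∈ S.powerset.erase S, dividend (gameOf δ) T
        = ∑ T ∈ S.powerset.erase S, δ T := by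
      refine Finset.sum_congr rfl fun T hT => ?_
      simp only [Finset.mem_erase, Finset.mem_powerset] at hT
      exact ih T (hT.2.ssubset_of_ne hT.1)
    rw [h1, gameOf, ← Finset.sum_erase_add _ _ (Finset.mem_powerset_self S)]
    ring

lemma Delta_eq (K : Finset (Finset α)) (v : Finset α → ℝ) (S : Finset α) :
    Delta K v S = v S - ∑ T ∈ K.filter (fun T => T ⊂ S), Delta K v T := by
  rw [Delta, Finset.sum_attach]

lemma filter_subset_split {K : Finset (Finset α)} {S : Finset α} (hS : S ∈ K) :
    K.filter (fun T => T ⊆ S) = insert S (K.filter (fun T => T ⊂ S)) := by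
  ext T
  simp only [Finset.mem_filter, Finset.mem_insert]
  constructor
  · rintro ⟨hTK, hTS⟩
    rcases hTS.ssubset_or_eq with h | h
    · exact Or.inr ⟨hTK, h⟩
    · exact Or.inl h
  · rintro (rfl | ⟨hTK, hTS⟩)
    · exact ⟨hS, Finset.Subset.rfl⟩
    · exact ⟨hTK, hTS.subset⟩

lemma sum_Delta {K : Finset (Finset α)} (v : Finset α → ℝ) {S : Finset α} (hS : S ∈ K) :
    ∑ T ∈ K.filter (fun T => T ⊆ S), Delta K v T = v S := by
  rw [filter_subset_split hS, Finset.sum_insert (by simp [ssubset_irrefl]), Delta_eq]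
  ring

lemma Delta_unique {K : Finset (Finset α)} {v f : Finset α → ℝ}
    (hf : ∀ S ∈ K, ∑ T ∈ K.filter (fun T => T ⊆ S), f T = v S) :
    ∀ S ∈ K, f S = Delta K v S := by
  intro S
  induction S using Finset.strongInduction with
  | _ S ih =>
    intro hS
    have h1 : ∑ T ∈ K.filter (fun T => T ⊂ S), Delta K v T
        = ∑ T ∈ K.filter (fun T => T ⊂ S), f T := by
      refine Finset.sum_congr rfl fun T hT => ?_
      simp only [Finset.mem_filter] at hT
      exact (ih T hT.2 hT.1).symm
    have h2 := hf S hS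
    rw [filter_subset_split hS, Finset.sum_insert (by simp [ssubset_irrefl])] at h2
    rw [Delta_eq, h1]
    linarith

lemma inf_mem {K : Finset (Finset α)} (hIC : InterClosed K)
    (hN : (Finset.univ : Finset α) ∈ K) :
    ∀ s : Finset (Finset α), s ⊆ K → s.inf id ∈ K := by
  intro s
  induction s using Finset.induction with
  | empty => intro _; simpa [Finset.top_eq_univ] using hN
  | insert _ _ hnotmem ih =>
    intro hs
    rw [Finset.inf_insert]
    have h1 := ih fun x hx => hs (Finset.mem_insert_of_mem hx)
    have h2 := hs (Finset.mem_insert_self _ _)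
    simpa [id, Finset.inf_eq_inter] using hIC _ h2 _ h1

lemma subset_cl (K : Finset (Finset α)) (T : Finset α) : T ⊆ cl K T := by
  show T ≤ cl K T
  apply Finset.le_inf
  intro S hS
  exact (Finset.mem_filter.1 hS).2

lemma cl_mem {K : Finset (Finset α)} (hIC : InterClosed K)
    (hN : (Finset.univ : Finset α) ∈ K) (T : Finset α) : cl K T ∈ K :=
  inf_mem hIC hN _ (Finset.filter_subset _ _)

lemma cl_subset {K : Finset (Finset α)} {S T : Finset α} (hS : S ∈ K) (hT : T ⊆ S) :
    cl K T ⊆ S := by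
  show cl K T ≤ S
  exact Finset.inf_le (Finset.mem_filter.2 ⟨hS, hT⟩)

lemma Delta_nonneg {K : Finset (Finset α)} (hIC : InterClosed K)
    (hN : (Finset.univ : Finset α) ∈ K) {v : Finset α → ℝ}
    (hext : PExtendable K v) : ∀ S ∈ K, 0 ≤ Delta K v S := by
  obtain ⟨w, hw0, hwpos, hwv⟩ := hext
  set f : Finset α → ℝ :=
    fun U => ∑ T ∈ U.powerset.filter (fun T => cl K T = U), dividend w T with hfdef
  have hf : ∀ S ∈ K, ∑ T ∈ K.filter (fun T => T ⊆ S), f T = v S := by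
    intro S hS
    have hmaps : ∀ T ∈ S.powerset, cl K T ∈ K.filter (fun T => T ⊆ S) := by
      intro T hT
      rw [Finset.mem_powerset] at hT
      exact Finset.mem_filter.2 ⟨cl_mem hIC hN T, cl_subset hS hT⟩
    have hfib := Finset.sum_fiberwise_of_maps_to hmaps (dividend w)
    have hinner : ∀ U ∈ K.filter (fun T => T ⊆ S),
        ∑ T ∈ S.powerset.filter (fun T => cl K T = U), dividend w T = f U := by
      intro U hU
      rw [Finset.mem_filter] at hU
      congr 1
      ext T
      simp only [Finset.mem_filter, Finset.mem_powerset]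
      constructor
      · rintro ⟨hTS, rfl⟩
        exact ⟨subset_cl K T, rfl⟩
      · rintro ⟨hTU, rfl⟩
        exact ⟨hTU.trans hU.2, rfl⟩
    calc ∑ T ∈ K.filter (fun T => T ⊆ S), f T
        = ∑ U ∈ K.filter (fun T => T ⊆ S),
            ∑ T ∈ S.powerset.filter (fun T => cl K T = U), dividend w T :=
          (Finset.sum_congr rfl hinner).symm
      _ = ∑ T ∈ S.powerset, dividend w T := hfib
      _ = w S := sum_dividend w S
      _ = v S := hwv S hS
  intro S hS
  rw [← Delta_unique hf S hS]
  exact Finset.sum_nonneg fun T _ => hwpos T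

/-- the R-game, defined through its dividends by `d(S) = Δ_v(S)` for
`S ∈ K` and `d(S) = 0` otherwise, is a P-extension of `(N, K, v)`. -/
theorem rGame_is_pExtension (K : Finset (Finset α))
    (hIC : InterClosed K) (hempty : ∅ ∈ K) (hN : (Finset.univ : Finset α) ∈ K)
    (v : Finset α → ℝ) (hv : v ∅ = 0) (hext : PExtendable K v) :
    ∃ w : Finset α → ℝ, w ∅ = 0 ∧
      (∀ S ∈ K, dividend w S = Delta K v S) ∧
      (∀ S : Finset α, S ∉ K → dividend w S = 0) ∧
      PExtension K v w := by
  classical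
  set δ : Finset α → ℝ := fun S => if S ∈ K then Delta K v S else 0 with hδ
  refine ⟨gameOf δ, ?_, ?_, ?_, ?_, fun S => ?_, ?_⟩
  · simp only [gameOf, Finset.powerset_empty, Finset.sum_singleton, hδ, if_pos hempty]
    rw [Delta_eq]
    have : K.filter (fun T => T ⊂ (∅ : Finset α)) = ∅ := by
      ext T; simp [Finset.not_ssubset_empty]
    simp [this, hv]
  · intro S hS
    rw [dividend_gameOf]
    simp [hδ, hS]
  · intro S hS
    rw [dividend_gameOf]
    simp [hδ, hS]
  · simp only [gameOf, Finset.powerset_empty, Finset.sum_singleton, hδ, if_pos hempty]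
    rw [Delta_eq]
    have : K.filter (fun T => T ⊂ (∅ : Finset α)) = ∅ := by
      ext T; simp [Finset.not_ssubset_empty]
    simp [this, hv]
  · rw [dividend_gameOf]
    simp only [hδ]
    split
    · exact Delta_nonneg hIC hN hext S (by assumption)
    · exact le_refl 0
  · intro S hS
    have : S.powerset.filter (fun T => T ∈ K) = K.filter (fun T => T ⊆ S) := by
      ext T
      simp only [Finset.mem_filter, Finset.mem_powerset]
      tauto
    rw [gameOf, ← Finset.sum_filter_add_sum_filter_not S.powerset (fun T => T ∈ K)]
    have h0 : ∑ T ∈ S.powerset.filter (fun T => ¬ T ∈ K), δ T = 0 :=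
      Finset.sum_eq_zero fun T hT => by
        simp only [Finset.mem_filter] at hT
        simp [hδ, hT.2]
    have h1 : ∑ T ∈ S.powerset.filter (fun T => T ∈ K), δ T = v S := by
      rw [this]
      rw [← sum_Delta v hS]
      refine Finset.sum_congr rfl fun T hT => ?_
      simp only [Finset.mem_filter] at hT
      simp [hδ, hT.1]
    rw [h0, h1, add_zero]
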